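/- Let Θ ⊆ ℝ^d be convex, f : Θ → ℝ be ξ⁻¹-strongly convex on Θ for some ξ ∈ (0,∞), and π = Z⁻¹ exp(−f). If θ* is the point maximizing π, then the random walk Metropolis-Hastings chain with Gaussian proposal N(θ, h I_d) satisfies A(θ*) ≤ (1 + h/ξ)^{−d/2}, and hence for every t ∈ ℤ₊, ‖P^t(θ*,·) − Π‖_TV ≥ (1 − (1 + h/ξ)^{−d/2})^t. -/

import Mathlib

open MeasureTheory

/-- The Metropolis-Hastings acceptance function
`a_MH(θ,θ') = min(π(θ')q(θ',θ)/(π(θ)q(θ,θ')), 1)`, equal to `1` when `π(θ)q(θ,θ') = 0`. -/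
noncomputable def mhAcceptFn {α : Type*} (pi : α → ℝ) (q : α → α → ℝ) (θ θ' : α) : ℝ :=
  if 0 < pi θ * q θ θ' then min ((pi θ' * q θ' θ) / (pi θ * q θ θ')) 1 else 1

/-- The Metropolis-Hastings acceptance probability `A(θ) = ∫ a_MH(θ,θ') q(θ,θ') dλ(θ')`. -/
noncomputable def mhAcceptProb {α : Type*} [MeasurableSpace α] (lam : Measure α)
    (pi : α → ℝ) (q : α → α → ℝ) (θ : α) : ℝ :=
  ∫ θ', mhAcceptFn pi q θ θ' * q θ θ' ∂lam

/-- The Metropolis-Hastings Markov kernel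
`P(θ,B) = ∫_B a_MH(θ,θ') q(θ,θ') dλ(θ') + δ_θ(B)(1 − A(θ))`. -/
noncomputable def mhKernel {α : Type*} [MeasurableSpace α] (lam : Measure α)
    (pi : α → ℝ) (q : α → α → ℝ) (θ : α) : Measure α :=
  lam.withDensity (fun θ' => ENNReal.ofReal (mhAcceptFn pi q θ θ' * q θ θ')) +
    (ENNReal.ofReal (1 - mhAcceptProb lam pi q θ)) • Measure.dirac θ

/-- The `t`-step iterate `P^t(θ,·)` of a Markov kernel, with `P^0(θ,·) = δ_θ`. -/
noncomputable def iterK {Ω : Type*} [MeasurableSpace Ω] (P : Ω → Measure Ω) :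
    ℕ → Ω → Measure Ω
  | 0 => fun θ => Measure.dirac θ
  | (t + 1) => fun θ => (iterK P t θ).bind P

/-- Total variation distance:
`‖μ − ν‖_TV = sup { ∫ f dμ − ∫ f dν : f measurable, 0 ≤ f ≤ 1 }`. -/
noncomputable def tvDist {Ω : Type*} [MeasurableSpace Ω] (μ ν : Measure Ω) : ℝ :=
  ⨆ f : {f : Ω → ℝ // Measurable f ∧ ∀ x, f x ∈ Set.Icc (0:ℝ) 1},
    (∫ x, f.1 x ∂μ - ∫ x, f.1 x ∂ν)

/-- The Gaussian random walk proposal density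
`q(θ,θ') = (2πh)^{−d/2} exp(−‖θ'−θ‖₂²/(2h))` of `N(θ, h I_d)`. -/
noncomputable def rwProposal (h : ℝ) (d : ℕ) (θ θ' : Fin d → ℝ) : ℝ :=
  (2 * Real.pi * h) ^ (-(d : ℝ) / 2) * Real.exp (-(∑ i, (θ' i - θ i) ^ 2) / (2 * h))

/-- The log-concave target density `π = Z⁻¹ exp(−f)` on `Θ` (and `0` off `Θ`), where
`Z = ∫_Θ exp(−f)`. -/
noncomputable def logConcaveTarget {d : ℕ} (Θ : Set (Fin d → ℝ))
    (f : (Fin d → ℝ) → ℝ) : (Fin d → ℝ) → ℝ :=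
  Θ.indicator (fun θ => Real.exp (-f θ) / ∫ x in Θ, Real.exp (-f x))

/-!
At the mode `θ*`, strong convexity gives `f θ - f θ* ≥ ‖θ - θ*‖² / (2ξ)`, so for the symmetric
Gaussian proposal the acceptance `a_MH(θ*, θ) ≤ π(θ) / π(θ*)` is at most `exp (-‖θ - θ*‖² / (2ξ))`;
integrating this against `N(θ*, h I)` gives `A(θ*) ≤ (1 + h/ξ)^{-d/2}`. Hence the chain started at
`θ*` is still there after `t` steps with probability at least `(1 - A(θ*))^t`, whereas `Π` has a
Lebesgue density and gives the point `θ*` no mass: the indicator of `{θ*}` witnesses the bound.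
-/

open Real Set Filter

section Gaussian

variable {ι : Type*} [Fintype ι]

lemma exp_neg_sum_sq_div_eq_prod (c : ℝ) (a x : ι → ℝ) :
    exp (-(∑ i, (x i - a i) ^ 2) / c) = ∏ i, exp (-c⁻¹ * (x i - a i) ^ 2) := by
  rw [← exp_sum, neg_div, Finset.sum_div, ← Finset.sum_neg_distrib]
  congr 1
  exact Finset.sum_congr rfl fun i _ => by ring

lemma integrable_exp_neg_sum_sq_div {c : ℝ} (hc : 0 < c) (a : ι → ℝ) :
    Integrable fun x : ι → ℝ => exp (-(∑ i, (x i - a i) ^ 2) / c) := by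
  simp only [exp_neg_sum_sq_div_eq_prod]
  exact Integrable.fintype_prod (f := fun i y => exp (-c⁻¹ * (y - a i) ^ 2))
    fun i => (integrable_exp_neg_mul_sq (by positivity)).comp_sub_right (a i)

lemma integral_exp_neg_sum_sq_div {c : ℝ} (hc : 0 < c) (a : ι → ℝ) :
    ∫ x : ι → ℝ, exp (-(∑ i, (x i - a i) ^ 2) / c) = (π * c) ^ ((Fintype.card ι : ℝ) / 2) := by
  simp only [exp_neg_sum_sq_div_eq_prod]
  rw [integral_fintype_prod_volume_eq_prod (fun i y => exp (-c⁻¹ * (y - a i) ^ 2))]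
  simp only [integral_sub_right_eq_self (fun y => exp (-c⁻¹ * y ^ 2)), integral_gaussian,
    div_inv_eq_mul, Finset.prod_const, Finset.card_univ, sqrt_eq_rpow]
  rw [← rpow_natCast, ← rpow_mul (by positivity)]
  ring_nf

end Gaussian

section RandomWalkProposal

variable {h : ℝ} {d : ℕ}

lemma rwProposal_pos (hh : 0 < h) (θ θ' : Fin d → ℝ) : 0 < rwProposal h d θ θ' := by
  unfold rwProposal
  positivity

lemma rwProposal_comm (θ θ' : Fin d → ℝ) : rwProposal h d θ' θ = rwProposal h d θ θ' := by
  simp only [rwProposal, sub_sq_comm (θ _)]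

lemma measurable_rwProposal :
    Measurable fun p : (Fin d → ℝ) × (Fin d → ℝ) => rwProposal h d p.1 p.2 := by
  unfold rwProposal
  fun_prop

lemma integrable_rwProposal (hh : 0 < h) (θ : Fin d → ℝ) : Integrable (rwProposal h d θ) :=
  (integrable_exp_neg_sum_sq_div (by positivity) θ).const_mul _

lemma integral_rwProposal (hh : 0 < h) (θ : Fin d → ℝ) : ∫ θ', rwProposal h d θ θ' = 1 := by
  have h2πh : 0 < 2 * π * h := by positivity
  simp only [rwProposal]
  rw [integral_const_mul, integral_exp_neg_sum_sq_div (by positivity), Fintype.card_fin,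
    show π * (2 * h) = 2 * π * h by ring, ← rpow_add h2πh, neg_div, neg_add_cancel, rpow_zero]

lemma integral_exp_mul_rwProposal (hh : 0 < h) {ξ : ℝ} (hξ : 0 < ξ) (θ : Fin d → ℝ) :
    ∫ θ', exp (-(∑ i, (θ' i - θ i) ^ 2) / (2 * ξ)) * rwProposal h d θ θ' =
      (1 + h / ξ) ^ (-(d : ℝ) / 2) := by
  -- the integrand is an unnormalised Gaussian of variance `hξ / (h + ξ)`
  have hprod : ∀ θ', exp (-(∑ i, (θ' i - θ i) ^ 2) / (2 * ξ)) * rwProposal h d θ θ' =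
      (2 * π * h) ^ (-(d : ℝ) / 2) * exp (-(∑ i, (θ' i - θ i) ^ 2) / (2 * h * ξ / (h + ξ))) := by
    intro θ'
    rw [rwProposal, mul_left_comm, ← exp_add]
    congr 2
    field_simp
    ring
  simp only [hprod]
  rw [integral_const_mul, integral_exp_neg_sum_sq_div (by positivity), Fintype.card_fin,
    neg_div, rpow_neg (by positivity), rpow_neg (by positivity), inv_mul_eq_div,
    ← div_rpow (by positivity) (by positivity), ← inv_rpow (by positivity)]
  congr 1
  field_simp
  ring

end RandomWalkProposal

section MetropolisHastings

variable {α : Type*} {pi : α → ℝ} {q : α → α → ℝ} {θ θ' : α}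

lemma mhAcceptFn_mem_Icc (hpi : ∀ x, 0 ≤ pi x) (hq : ∀ x y, 0 ≤ q x y) (θ θ' : α) :
    mhAcceptFn pi q θ θ' ∈ Icc (0 : ℝ) 1 := by
  unfold mhAcceptFn
  split_ifs with hpos
  · exact ⟨le_min (div_nonneg (mul_nonneg (hpi _) (hq _ _)) hpos.le) zero_le_one,
      min_le_right _ _⟩
  · exact ⟨zero_le_one, le_rfl⟩

lemma mhAcceptFn_le_div (hsymm : q θ' θ = q θ θ') (hpi : 0 < pi θ) (hq : 0 < q θ θ') :
    mhAcceptFn pi q θ θ' ≤ pi θ' / pi θ := by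
  rw [mhAcceptFn, if_pos (mul_pos hpi hq), hsymm, mul_div_mul_right _ _ hq.ne']
  exact min_le_left _ _

variable [MeasurableSpace α] {lam : Measure α}

lemma measurable_mhAcceptFn_mul (hpi : Measurable pi)
    (hq : Measurable fun p : α × α => q p.1 p.2) :
    Measurable fun p : α × α => mhAcceptFn pi q p.1 p.2 * q p.1 p.2 := by
  have hfwd : Measurable fun p : α × α => pi p.1 * q p.1 p.2 := (hpi.comp measurable_fst).mul hq
  have hbwd : Measurable fun p : α × α => pi p.2 * q p.2 p.1 :=
    (hpi.comp measurable_snd).mul (hq.comp measurable_swap)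
  exact (Measurable.ite (measurableSet_lt measurable_const hfwd)
    ((hbwd.div hfwd).min measurable_const) measurable_const).mul hq

lemma integrable_mhAcceptFn_mul (hpi : Measurable pi) (hpi0 : ∀ x, 0 ≤ pi x)
    (hq : Measurable fun p : α × α => q p.1 p.2) (hq0 : ∀ x y, 0 ≤ q x y)
    (hqint : Integrable (q θ) lam) :
    Integrable (fun θ' => mhAcceptFn pi q θ θ' * q θ θ') lam := by
  refine hqint.mono' ((measurable_mhAcceptFn_mul hpi hq).comp
    measurable_prodMk_left).aestronglyMeasurable (Eventually.of_forall fun θ' => ?_)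
  have ⟨h0, h1⟩ := mhAcceptFn_mem_Icc hpi0 hq0 θ θ'
  rw [Real.norm_eq_abs, abs_of_nonneg (mul_nonneg h0 (hq0 _ _))]
  exact mul_le_of_le_one_left (hq0 _ _) h1

lemma mhAcceptProb_mem_Icc (hpi : Measurable pi) (hpi0 : ∀ x, 0 ≤ pi x)
    (hq : Measurable fun p : α × α => q p.1 p.2) (hq0 : ∀ x y, 0 ≤ q x y)
    (hqint : Integrable (q θ) lam) (hq1 : ∫ θ', q θ θ' ∂lam = 1) :
    mhAcceptProb lam pi q θ ∈ Icc (0 : ℝ) 1 := by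
  have hbound θ' := mhAcceptFn_mem_Icc hpi0 hq0 θ θ'
  refine ⟨integral_nonneg fun θ' => mul_nonneg (hbound θ').1 (hq0 _ _), ?_⟩
  rw [mhAcceptProb, ← hq1]
  exact integral_mono (integrable_mhAcceptFn_mul hpi hpi0 hq hq0 hqint) hqint
    fun θ' => mul_le_of_le_one_left (hq0 _ _) (hbound θ').2

lemma isProbabilityMeasure_mhKernel (hpi : Measurable pi) (hpi0 : ∀ x, 0 ≤ pi x)
    (hq : Measurable fun p : α × α => q p.1 p.2) (hq0 : ∀ x y, 0 ≤ q x y)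
    (hqint : Integrable (q θ) lam) (hq1 : ∫ θ', q θ θ' ∂lam = 1) :
    IsProbabilityMeasure (mhKernel lam pi q θ) := by
  have ⟨hA0, hA1⟩ := mhAcceptProb_mem_Icc hpi hpi0 hq hq0 hqint hq1
  constructor
  rw [mhKernel, Measure.add_apply, Measure.smul_apply, withDensity_apply _ MeasurableSet.univ,
    Measure.restrict_univ, ← ofReal_integral_eq_lintegral_ofReal
      (integrable_mhAcceptFn_mul hpi hpi0 hq hq0 hqint)
      (Eventually.of_forall fun θ' => mul_nonneg (mhAcceptFn_mem_Icc hpi0 hq0 θ θ').1 (hq0 _ _)),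
    measure_univ, smul_eq_mul, mul_one, ← mhAcceptProb, ← ENNReal.ofReal_add hA0 (by linarith)]
  simp

lemma measurable_mhKernel [SFinite lam] (hpi : Measurable pi)
    (hq : Measurable fun p : α × α => q p.1 p.2) : Measurable (mhKernel lam pi q) := by
  have hF := measurable_mhAcceptFn_mul hpi hq
  refine Measure.measurable_of_measurable_coe _ fun s hs => ?_
  simp only [mhKernel, Measure.add_apply, Measure.smul_apply, withDensity_apply _ hs,
    Measure.dirac_apply' _ hs, smul_eq_mul]
  refine Measurable.add ?_ ?_
  · simp only [← lintegral_indicator hs]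
    exact ((ENNReal.measurable_ofReal.comp hF).indicator (measurable_snd hs)).lintegral_prod_right'
  · exact (ENNReal.measurable_ofReal.comp
      (hF.stronglyMeasurable.integral_prod_right'.measurable.const_sub 1)).mul
      (measurable_one.indicator hs)

lemma ofReal_one_sub_mhAcceptProb_le_mhKernel_singleton (θ : α) :
    ENNReal.ofReal (1 - mhAcceptProb lam pi q θ) ≤ mhKernel lam pi q θ {θ} := by
  rw [mhKernel, Measure.add_apply, Measure.smul_apply,
    Measure.dirac_apply_of_mem (mem_singleton θ), smul_eq_mul, mul_one]
  exact le_add_self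

end MetropolisHastings

section Iterates

variable {Ω : Type*} [MeasurableSpace Ω] {P : Ω → Measure Ω}

lemma isProbabilityMeasure_iterK (hP : Measurable P) (hP1 : ∀ θ, IsProbabilityMeasure (P θ)) :
    ∀ t θ, IsProbabilityMeasure (iterK P t θ)
  | 0, _ => Measure.dirac.isProbabilityMeasure
  | t + 1, θ =>
    have := isProbabilityMeasure_iterK hP hP1 t θ
    isProbabilityMeasure_bind hP.aemeasurable (Eventually.of_forall hP1)

lemma pow_le_iterK_singleton [MeasurableSingletonClass Ω] (hP : Measurable P) (θ : Ω) :
    ∀ t, P θ {θ} ^ t ≤ iterK P t θ {θ}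
  | 0 => by simp [iterK]
  | t + 1 => by
    simp only [iterK]
    rw [Measure.bind_apply (measurableSet_singleton θ) hP.aemeasurable]
    calc P θ {θ} ^ (t + 1) = P θ {θ} ^ t * P θ {θ} := pow_succ _ _
      _ ≤ iterK P t θ {θ} * P θ {θ} := by gcongr; exact pow_le_iterK_singleton hP θ t
      _ = ∫⁻ ω in {θ}, P ω {θ} ∂iterK P t θ := by rw [lintegral_singleton, mul_comm]
      _ ≤ ∫⁻ ω, P ω {θ} ∂iterK P t θ := setLIntegral_le_lintegral _ _

lemma pow_le_measureReal_iterK_singleton [MeasurableSingletonClass Ω] (hP : Measurable P)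
    (hP1 : ∀ θ, IsProbabilityMeasure (P θ)) {θ : Ω} {c : ℝ} (hc : 0 ≤ c)
    (hstay : ENNReal.ofReal c ≤ P θ {θ}) (t : ℕ) : c ^ t ≤ (iterK P t θ).real {θ} := by
  have := isProbabilityMeasure_iterK hP hP1 t θ
  rw [← ENNReal.toReal_ofReal hc, ← ENNReal.toReal_pow]
  exact ENNReal.toReal_mono (measure_ne_top _ _)
    ((pow_le_pow_left' hstay t).trans (pow_le_iterK_singleton hP θ t))

end Iterates

lemma measureReal_sub_le_tvDist {Ω : Type*} [MeasurableSpace Ω] {μ ν : Measure Ω}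
    [IsFiniteMeasure μ] {s : Set Ω} (hs : MeasurableSet s) :
    μ.real s - ν.real s ≤ tvDist μ ν := by
  have hbdd : BddAbove (range fun g : {g : Ω → ℝ // Measurable g ∧ ∀ x, g x ∈ Icc (0 : ℝ) 1} =>
      ∫ x, g.1 x ∂μ - ∫ x, g.1 x ∂ν) := by
    refine ⟨μ.real univ, forall_mem_range.2 fun g => ?_⟩
    have hμ : ∫ x, g.1 x ∂μ ≤ μ.real univ := by
      simpa using integral_mono_of_nonneg (Eventually.of_forall fun x => (g.2.2 x).1)
        (integrable_const (1 : ℝ)) (Eventually.of_forall fun x => (g.2.2 x).2)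
    have hν : 0 ≤ ∫ x, g.1 x ∂ν := integral_nonneg fun x => (g.2.2 x).1
    linarith
  have hind : ∀ x, s.indicator 1 x ∈ Icc (0 : ℝ) 1 := fun x => by
    by_cases hx : x ∈ s <;> simp [hx]
  have := le_ciSup hbdd ⟨s.indicator 1, measurable_one.indicator hs, hind⟩
  rwa [integral_indicator_one hs, integral_indicator_one hs] at this

section StrongConvexity

open Topology

variable {ι : Type*} [Fintype ι]

lemma sum_sq_one_sub_smul_add_smul (a b : ι → ℝ) (t : ℝ) :
    ∑ i, ((1 - t) • a + t • b) i ^ 2 =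
      (1 - t) * ∑ i, a i ^ 2 + t * ∑ i, b i ^ 2 - t * (1 - t) * ∑ i, (b i - a i) ^ 2 := by
  simp only [Finset.mul_sum, ← Finset.sum_add_distrib, ← Finset.sum_sub_distrib]
  refine Finset.sum_congr rfl fun i _ => ?_
  simp only [Pi.add_apply, Pi.smul_apply, smul_eq_mul]
  ring

/-- Compare `f x₀` with `f` on the segment from `x₀` towards `x`, and let the point on the
segment tend to `x₀`. -/
lemma ConvexOn.sum_sq_div_le_sub_of_isMinOn {Θ : Set (ι → ℝ)} {f : (ι → ℝ) → ℝ} {ξ : ℝ}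
    (hsc : ConvexOn ℝ Θ fun θ => f θ - (∑ i, θ i ^ 2) / (2 * ξ))
    {x₀ : ι → ℝ} (hx₀ : x₀ ∈ Θ) (hmin : IsMinOn f Θ x₀) {x : ι → ℝ} (hx : x ∈ Θ) :
    (∑ i, (x i - x₀ i) ^ 2) / (2 * ξ) ≤ f x - f x₀ := by
  set c := (∑ i, (x i - x₀ i) ^ 2) / (2 * ξ)
  have hsegment : ∀ t ∈ Ioo (0 : ℝ) 1, (1 - t) * c ≤ f x - f x₀ := by
    rintro t ⟨ht0, ht1⟩
    have h1t : (0 : ℝ) ≤ 1 - t := by linarith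
    have hconv := hsc.2 hx₀ hx h1t ht0.le (sub_add_cancel 1 t)
    have hf : f x₀ ≤ f ((1 - t) • x₀ + t • x) :=
      hmin (hsc.1 hx₀ hx h1t ht0.le (sub_add_cancel 1 t))
    have hquad : (∑ i, ((1 - t) • x₀ + t • x) i ^ 2) / (2 * ξ) =
        (1 - t) * ((∑ i, x₀ i ^ 2) / (2 * ξ)) + t * ((∑ i, x i ^ 2) / (2 * ξ)) -
          t * (1 - t) * c := by
      rw [sum_sq_one_sub_smul_add_smul]
      ring
    simp only [smul_eq_mul, hquad] at hconv
    have hmul : t * ((1 - t) * c) ≤ t * (f x - f x₀) := by linarith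
    exact le_of_mul_le_mul_left hmul ht0
  have hlim : Tendsto (fun t : ℝ => (1 - t) * c) (𝓝[>] 0) (𝓝 c) := by
    have : Tendsto (fun t : ℝ => (1 - t) * c) (𝓝 0) (𝓝 ((1 - 0) * c)) :=
      ((continuous_const.sub continuous_id).mul continuous_const).tendsto 0
    simpa using this.mono_left nhdsWithin_le_nhds
  exact le_of_tendsto hlim (eventually_of_mem (Ioo_mem_nhdsGT one_pos) hsegment)

end StrongConvexity

section LogConcaveTarget

variable {d : ℕ} {Θ : Set (Fin d → ℝ)} {f : (Fin d → ℝ) → ℝ} {θ θ₀ : Fin d → ℝ}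

lemma measurable_logConcaveTarget (hΘ : MeasurableSet Θ) (hf : Measurable f) :
    Measurable (logConcaveTarget Θ f) :=
  ((measurable_exp.comp hf.neg).div_const _).indicator hΘ

lemma logConcaveTarget_nonneg (hZ : 0 ≤ ∫ x in Θ, exp (-f x)) (θ : Fin d → ℝ) :
    0 ≤ logConcaveTarget Θ f θ :=
  indicator_nonneg (fun _ _ => div_nonneg (exp_pos _).le hZ) θ

lemma logConcaveTarget_of_mem (hθ : θ ∈ Θ) :
    logConcaveTarget Θ f θ = exp (-f θ) / ∫ x in Θ, exp (-f x) :=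
  indicator_of_mem hθ _

lemma isMinOn_of_isMaxOn_logConcaveTarget (hZ : 0 < ∫ x in Θ, exp (-f x)) (hθ₀ : θ₀ ∈ Θ)
    (hmax : IsMaxOn (logConcaveTarget Θ f) Θ θ₀) : IsMinOn f Θ θ₀ := fun θ hθ => by
  have := isMaxOn_iff.1 hmax θ hθ
  rw [logConcaveTarget_of_mem hθ, logConcaveTarget_of_mem hθ₀, div_le_div_iff_of_pos_right hZ,
    exp_le_exp, neg_le_neg_iff] at this
  exact this

lemma logConcaveTarget_div_le_exp {ξ : ℝ}
    (hsc : ConvexOn ℝ Θ fun θ => f θ - (∑ i, θ i ^ 2) / (2 * ξ))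
    (hZ : 0 < ∫ x in Θ, exp (-f x)) (hθ₀ : θ₀ ∈ Θ) (hmax : IsMaxOn (logConcaveTarget Θ f) Θ θ₀)
    (θ : Fin d → ℝ) :
    logConcaveTarget Θ f θ / logConcaveTarget Θ f θ₀ ≤
      exp (-(∑ i, (θ i - θ₀ i) ^ 2) / (2 * ξ)) := by
  by_cases hθ : θ ∈ Θ
  · have hgrowth := hsc.sum_sq_div_le_sub_of_isMinOn hθ₀
      (isMinOn_of_isMaxOn_logConcaveTarget hZ hθ₀ hmax) hθ
    rw [logConcaveTarget_of_mem hθ, logConcaveTarget_of_mem hθ₀,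
      div_div_div_cancel_right₀ hZ.ne', ← exp_sub, exp_le_exp, neg_div]
    linarith
  · rw [logConcaveTarget, indicator_of_notMem hθ, zero_div]
    exact (exp_pos _).le

end LogConcaveTarget

lemma mhAcceptProb_rwProposal_le_of_isMaxOn {d : ℕ} {h ξ : ℝ} (hh : 0 < h) (hξ : 0 < ξ)
    {Θ : Set (Fin d → ℝ)} {f : (Fin d → ℝ) → ℝ}
    (hsc : ConvexOn ℝ Θ fun θ => f θ - (∑ i, θ i ^ 2) / (2 * ξ))
    (hZ : 0 < ∫ x in Θ, exp (-f x)) {θ₀ : Fin d → ℝ} (hθ₀ : θ₀ ∈ Θ)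
    (hmax : IsMaxOn (logConcaveTarget Θ f) Θ θ₀) :
    mhAcceptProb volume (logConcaveTarget Θ f) (rwProposal h d) θ₀ ≤
      (1 + h / ξ) ^ (-(d : ℝ) / 2) := by
  have hπ₀ : 0 < logConcaveTarget Θ f θ₀ := by
    rw [logConcaveTarget_of_mem hθ₀]
    positivity
  have hq0 θ θ' := (rwProposal_pos (d := d) hh θ θ').le
  have hgauss :
      Integrable fun θ => exp (-(∑ i, (θ i - θ₀ i) ^ 2) / (2 * ξ)) * rwProposal h d θ₀ θ :=
    (integrable_rwProposal hh θ₀).bdd_mul (Measurable.aestronglyMeasurable (by fun_prop))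
      (Eventually.of_forall fun θ => by
        rw [norm_of_nonneg (exp_pos _).le, exp_le_one_iff, neg_div, neg_nonpos]
        positivity)
  rw [mhAcceptProb, ← integral_exp_mul_rwProposal hh hξ θ₀]
  refine integral_mono_of_nonneg (Eventually.of_forall fun θ => mul_nonneg
    (mhAcceptFn_mem_Icc (logConcaveTarget_nonneg hZ.le) hq0 θ₀ θ).1 (hq0 _ _)) hgauss
    (Eventually.of_forall fun θ => mul_le_mul_of_nonneg_right ?_ (hq0 _ _))
  exact (mhAcceptFn_le_div (rwProposal_comm θ₀ θ) hπ₀ (rwProposal_pos hh θ₀ θ)).trans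
    (logConcaveTarget_div_le_exp hsc hZ hθ₀ hmax θ)

theorem rwmh_strongly_convex_tv_lower_bound_at_max_general
    {d : ℕ} (hd : 0 < d) (h ξ : ℝ) (hh : 0 < h) (hξ : 0 < ξ)
    (Θ : Set (Fin d → ℝ))
    (hΘmeas : MeasurableSet Θ)
    (f : (Fin d → ℝ) → ℝ) (hfm : Measurable f)
    (hsc : ConvexOn ℝ Θ (fun θ => f θ - (∑ i, θ i ^ 2) / (2 * ξ)))
    (hZ : 0 < ∫ x in Θ, Real.exp (-f x))
    (θstar : Fin d → ℝ) (hθstar : θstar ∈ Θ)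
    (hmax : ∀ θ ∈ Θ, logConcaveTarget Θ f θ ≤ logConcaveTarget Θ f θstar) :
    mhAcceptProb volume (logConcaveTarget Θ f) (rwProposal h d) θstar ≤
        (1 + h / ξ) ^ (-(d : ℝ) / 2) ∧
      ∀ t : ℕ, 1 ≤ t →
        (1 - (1 + h / ξ) ^ (-(d : ℝ) / 2)) ^ t ≤
          tvDist
            (iterK (mhKernel volume (logConcaveTarget Θ f) (rwProposal h d)) t θstar)
            (volume.withDensity (fun x => ENNReal.ofReal (logConcaveTarget Θ f x))) := by
  have hA := mhAcceptProb_rwProposal_le_of_isMaxOn hh hξ hsc hZ hθstar (isMaxOn_iff.2 hmax)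
  refine ⟨hA, fun t _ => ?_⟩
  have hπ := measurable_logConcaveTarget hΘmeas hfm
  have hP := measurable_mhKernel (lam := volume) hπ (measurable_rwProposal (h := h))
  have hP1 θ := isProbabilityMeasure_mhKernel hπ (logConcaveTarget_nonneg hZ.le)
    measurable_rwProposal (fun _ _ => (rwProposal_pos hh _ _).le) (integrable_rwProposal hh θ)
    (integral_rwProposal hh θ)
  have hB1 : (1 + h / ξ) ^ (-(d : ℝ) / 2) ≤ 1 :=
    rpow_le_one_of_one_le_of_nonpos (by simp only [le_add_iff_nonneg_right]; positivity)
      (by simp only [neg_div, neg_nonpos]; positivity)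
  have hatom : (volume.withDensity fun x => ENNReal.ofReal (logConcaveTarget Θ f x)).real
      {θstar} = 0 := by
    have : Nonempty (Fin d) := ⟨⟨0, hd⟩⟩
    rw [measureReal_def, withDensity_absolutelyContinuous _ _ (measure_singleton θstar),
      ENNReal.toReal_zero]
  have := isProbabilityMeasure_iterK hP hP1 t θstar
  calc (1 - (1 + h / ξ) ^ (-(d : ℝ) / 2)) ^ t
      ≤ (iterK (mhKernel volume (logConcaveTarget Θ f) (rwProposal h d)) t θstar).real {θstar} :=
        pow_le_measureReal_iterK_singleton hP hP1 (sub_nonneg.2 hB1)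
          ((ENNReal.ofReal_le_ofReal (by linarith)).trans
            (ofReal_one_sub_mhAcceptProb_le_mhKernel_singleton θstar)) t
    _ = _ - _ := by rw [hatom, sub_zero]
    _ ≤ _ := measureReal_sub_le_tvDist (measurableSet_singleton θstar)

/-- Corollary 2: for RWMH with a `ξ⁻¹`-strongly convex potential on convex `Θ`, if `θ*`
maximizes `π`, then `A(θ*) ≤ (1 + h/ξ)^{−d/2}` and hence
`‖P^t(θ*,·) − Π‖_TV ≥ (1 − (1 + h/ξ)^{−d/2})^t` for every `t ∈ ℤ₊`. -/
theorem rwmh_strongly_convex_tv_lower_bound_at_max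
    {d : ℕ} (hd : 0 < d) (h ξ : ℝ) (hh : 0 < h) (hξ : 0 < ξ)
    (Θ : Set (Fin d → ℝ)) (hΘne : Θ.Nonempty) (hΘconv : Convex ℝ Θ)
    (hΘmeas : MeasurableSet Θ)
    (f : (Fin d → ℝ) → ℝ) (hfm : Measurable f)
    (hsc : ConvexOn ℝ Θ (fun θ => f θ - (∑ i, θ i ^ 2) / (2 * ξ)))
    (hfint : IntegrableOn (fun θ => Real.exp (-f θ)) Θ volume)
    (hZ : 0 < ∫ x in Θ, Real.exp (-f x))
    (θstar : Fin d → ℝ) (hθstar : θstar ∈ Θ)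
    (hmax : ∀ θ ∈ Θ, logConcaveTarget Θ f θ ≤ logConcaveTarget Θ f θstar) :
    mhAcceptProb volume (logConcaveTarget Θ f) (rwProposal h d) θstar ≤
        (1 + h / ξ) ^ (-(d : ℝ) / 2) ∧
      ∀ t : ℕ, 1 ≤ t →
        (1 - (1 + h / ξ) ^ (-(d : ℝ) / 2)) ^ t ≤
          tvDist
            (iterK (mhKernel volume (logConcaveTarget Θ f) (rwProposal h d)) t θstar)
            (volume.withDensity (fun x => ENNReal.ofReal (logConcaveTarget Θ f x))) :=
  rwmh_strongly_convex_tv_lower_bound_at_max_general hd h ξ hh hξ Θ hΘmeas f hfm hsc hZ θstar hθstar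
    hmax
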